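/- If x ∈ TL(D_n)_ε satisfies: x is a nonzero idempotent, s₀xs₀ = x, and xU_i = 0 = U_ix for i = 0,…,n-1, then x = d_{n,ε}. Moreover b_{n,η,ε} = (1/2)(d_{n,ε} + η·s₀d_{n,ε}) for η ∈ {+,-}. -/

import Mathlib

/-! The `b_{m,η}` are built by the Jones–Wenzl step `B ↦ B + c • B W B`. By induction
they are idempotents with `s₀ b = b s₀ = η b`, killed on the left by `U_1, …, U_{m-1}`, and
`U_{m+1} b_{m+1} U_{m+1} = γ_m • b_m U_{m+1}`; the coefficients satisfy `1 + c_m γ_m = 0`, which is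
exactly what makes the next generator kill `b_{m+2}`.

Hence `s₀ d = b_+ - b_-`, which gives the formula for `b_η`. For `k ≥ 2` the generator `U_k`
commutes with `s₀`, so the cross terms `b_± U_k b_∓` vanish and `d` obeys the same recursion;
together with `d_2 = 1 + (c_0 / 2) • (U_1 + U_0)` this puts `d - 1` in the non-unital algebra `N`
generated by `U_0, …, U_{n-1}`, while `N d = 0`.

Every `x ∈ TL(D_n)` is `c + y` with `y ∈ N`. If `x` is a nonzero idempotent with `x U_i = 0`, then
`x N = 0`, so `x = x² = c x` forces `c = 1`, and `x = x d = d`. -/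

noncomputable section

abbrev Kq : Type := RatFunc ℂ

def qq : Kq := RatFunc.X

/-- The quantum integer `[m] = (q^m - q^{-m})/(q - q⁻¹)` in `ℂ(q)`. -/
def qint (m : ℤ) : Kq := (qq ^ m - qq ^ (-m)) / (qq - qq⁻¹)

/-- Generators of the type `B` Temperley–Lieb algebra: `none` is `s₀`, and
`some i` is the cup-cap generator `U_{i+1}`. -/
def g : Option ℕ → FreeAlgebra Kq (Option ℕ) := FreeAlgebra.ι Kq

/-- The defining relations of the (specialized) type `B` Temperley–Lieb
algebra (on infinitely many strands, so that `TL(B_n)` sits inside for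
every `n`): `U_i² = -ε(q+q⁻¹)U_i`, distant commutativity,
`U_i U_{i±1} U_i = U_i`, `s₀² = 1`, `U₁ s₀ U₁ = 0` and `s₀ U_i = U_i s₀`
for `i ≥ 2`.  (Recall `some i` stands for `U_{i+1}`.) -/
inductive TLBRel (ε : Kq) : FreeAlgebra Kq (Option ℕ) → FreeAlgebra Kq (Option ℕ) → Prop
  | Usq (i : ℕ) :
      TLBRel ε (g (some i) * g (some i)) ((-(ε * (qq + qq⁻¹))) • g (some i))
  | Ucomm (i j : ℕ) (h : i + 2 ≤ j) :
      TLBRel ε (g (some i) * g (some j)) (g (some j) * g (some i))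
  | Ubraid1 (i : ℕ) :
      TLBRel ε (g (some i) * g (some (i+1)) * g (some i)) (g (some i))
  | Ubraid2 (i : ℕ) :
      TLBRel ε (g (some (i+1)) * g (some i) * g (some (i+1))) (g (some (i+1)))
  | s0sq : TLBRel ε (g none * g none) 1
  | UsU : TLBRel ε (g (some 0) * g none * g (some 0)) 0
  | scomm (i : ℕ) (h : 1 ≤ i) :
      TLBRel ε (g none * g (some i)) (g (some i) * g none)

/-- The (specialized) type `B` Temperley–Lieb algebra `TL(B)_ε` (on
infinitely many strands). -/
abbrev TLB (ε : Kq) := RingQuot (TLBRel ε)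

/-- The generator `s₀` of `TL(B)_ε`. -/
def s0 (ε : Kq) : TLB ε := RingQuot.mkAlgHom Kq (TLBRel ε) (g none)

/-- The generator `U_i` of `TL(B)_ε`, for `i ≥ 1`. -/
def UU (ε : Kq) (i : ℕ) : TLB ε := RingQuot.mkAlgHom Kq (TLBRel ε) (g (some (i - 1)))

/-- The subalgebra `TL(B_n)_ε ⊆ TL(B)_ε`, generated by `s₀, U₁, …, U_{n-1}`. -/
def TLBsub (ε : Kq) (n : ℕ) : Subalgebra Kq (TLB ε) :=
  Algebra.adjoin Kq ({s0 ε} ∪ {x | ∃ i, 1 ≤ i ∧ i ≤ n - 1 ∧ x = UU ε i})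

/-- The type `D` generators: `UD 0 = U₀ = s₀U₁s₀` and `UD i = U_i` for `i ≥ 1`. -/
def UD (ε : Kq) (i : ℕ) : TLB ε :=
  if i = 0 then s0 ε * UU ε 1 * s0 ε else UU ε i

/-- The subalgebra `TL(D_n)_ε ⊆ TL(B)_ε`, generated by `U₀, U₁, …, U_{n-1}`. -/
def TLDsub (ε : Kq) (n : ℕ) : Subalgebra Kq (TLB ε) :=
  Algebra.adjoin Kq {x | ∃ i ≤ n - 1, x = UD ε i}

/-- The type `B_n` Jones–Wenzl projectors `b_{n,η,ε}` (for `η = ±1`), defined by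
`b_{1,η,ε} = (1 + η s₀)/2` and the recursion
`b_{n+1,η,ε} = b_{n,η,ε} + ε (q^{n-1}+q^{-(n-1)})/(q^n+q^{-n}) · b_{n,η,ε} U_n b_{n,η,ε}`. -/
def bB (ε η : Kq) : ℕ → TLB ε
  | 0 => 1
  | 1 => (2 : Kq)⁻¹ • (1 + η • s0 ε)
  | (n+2) =>
      bB ε η (n+1) +
        (ε * (qq ^ n + qq⁻¹ ^ n) / (qq ^ (n+1) + qq⁻¹ ^ (n+1))) •
          (bB ε η (n+1) * UU ε (n+1) * bB ε η (n+1))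

/-- The type `D_n` Jones–Wenzl projector `d_{n,ε} = b_{n,+,ε} + b_{n,-,ε}`. -/
def dD (ε : Kq) (n : ℕ) : TLB ε := bB ε 1 n + bB ε (-1) n

section AdjoinAnnihilator

variable {K A : Type*} [Field K] [Ring A] [Algebra K A] {S : Set A}

theorem exists_sub_algebraMap_mem_nonUnitalAlgebra_adjoin {x : A} (hx : x ∈ Algebra.adjoin K S) :
    ∃ c : K, x - algebraMap K A c ∈ NonUnitalAlgebra.adjoin K S := by
  rw [← Algebra.adjoin_nonUnitalSubalgebra, ← NonUnitalSubalgebra.unitization_range] at hx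
  obtain ⟨u, rfl⟩ := hx
  exact ⟨u.fst, by simp⟩

theorem mul_eq_zero_of_mem_nonUnitalAlgebra_adjoin_right {x y : A} (hS : ∀ s ∈ S, x * s = 0)
    (hy : y ∈ NonUnitalAlgebra.adjoin K S) : x * y = 0 := by
  induction hy using NonUnitalAlgebra.adjoin_induction with
  | mem s hs => exact hS s hs
  | add a b _ _ ha hb => rw [mul_add, ha, hb, add_zero]
  | zero => exact mul_zero x
  | mul a b _ _ ha _ => rw [← mul_assoc, ha, zero_mul]
  | smul c a _ ha => rw [mul_smul_comm, ha, smul_zero]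

theorem mul_eq_zero_of_mem_nonUnitalAlgebra_adjoin_left {x y : A} (hS : ∀ s ∈ S, s * x = 0)
    (hy : y ∈ NonUnitalAlgebra.adjoin K S) : y * x = 0 := by
  induction hy using NonUnitalAlgebra.adjoin_induction with
  | mem s hs => exact hS s hs
  | add a b _ _ ha hb => rw [add_mul, ha, hb, add_zero]
  | zero => exact zero_mul x
  | mul a b _ _ _ hb => rw [mul_assoc, hb, mul_zero]
  | smul c a _ ha => rw [smul_mul_assoc, ha, smul_zero]

theorem sub_one_mem_nonUnitalAlgebra_adjoin_of_isIdempotentElem {x : A}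
    (hx : x ∈ Algebra.adjoin K S) (hx0 : x ≠ 0) (hxx : IsIdempotentElem x)
    (hxS : ∀ s ∈ S, x * s = 0) : x - 1 ∈ NonUnitalAlgebra.adjoin K S := by
  obtain ⟨c, hc⟩ := exists_sub_algebraMap_mem_nonUnitalAlgebra_adjoin hx
  have hxc : x = c • x := by
    have h := mul_eq_zero_of_mem_nonUnitalAlgebra_adjoin_right hxS hc
    rwa [mul_sub, hxx.eq, sub_eq_zero, ← Algebra.commutes, ← Algebra.smul_def] at h
  obtain rfl : 1 = c := by
    have h : (1 - c) • x = 0 := by rw [sub_smul, one_smul, ← hxc, sub_self]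
    exact sub_eq_zero.mp ((smul_eq_zero.mp h).resolve_right hx0)
  simpa using hc

theorem eq_of_isIdempotentElem_of_mul_eq_zero {x d : A} (hx : x ∈ Algebra.adjoin K S)
    (hx0 : x ≠ 0) (hxx : IsIdempotentElem x) (hxS : ∀ s ∈ S, x * s = 0)
    (hd : d - 1 ∈ NonUnitalAlgebra.adjoin K S) (hSd : ∀ s ∈ S, s * d = 0) : x = d := by
  have hxd : x * (d - 1) = 0 := mul_eq_zero_of_mem_nonUnitalAlgebra_adjoin_right hxS hd
  have hdx : (x - 1) * d = 0 := mul_eq_zero_of_mem_nonUnitalAlgebra_adjoin_left hSd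
    (sub_one_mem_nonUnitalAlgebra_adjoin_of_isIdempotentElem hx hx0 hxx hxS)
  rw [mul_sub_one, sub_eq_zero] at hxd
  rw [sub_one_mul, sub_eq_zero] at hdx
  exact hxd.symm.trans hdx

theorem mul_mul_mem_of_sub_one_mem {N : NonUnitalSubalgebra K A} {a u : A} (ha : a - 1 ∈ N)
    (hu : u ∈ N) : a * u * a ∈ N := by
  have h : a * u * a = u + (a - 1) * u + u * (a - 1) + (a - 1) * u * (a - 1) := by noncomm_ring
  rw [h]
  exact add_mem (add_mem (add_mem hu (mul_mem ha hu)) (mul_mem hu ha)) (mul_mem (mul_mem ha hu) ha)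

theorem mul_mul_eq_zero_of_mul_eq_smul {p q s u : A} {α β : K} (hαβ : α ≠ β)
    (hp : p * s = α • p) (hq : s * q = β • q) (hsu : Commute s u) : p * u * q = 0 := by
  by_contra h
  refine hαβ (smul_left_injective K h ?_)
  calc α • (p * u * q) = p * s * u * q := by rw [hp, smul_mul_assoc, smul_mul_assoc]
    _ = p * u * (s * q) := by rw [mul_assoc p, hsu.eq, ← mul_assoc, mul_assoc]
    _ = β • (p * u * q) := by rw [hq, mul_smul_comm]

end AdjoinAnnihilator

def qsum (m : ℕ) : Kq := qq ^ m + qq⁻¹ ^ m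

def jwCoeff (ε : Kq) (m : ℕ) : Kq := ε * qsum m / qsum (m + 1)

def traceCoeff (ε : Kq) (m : ℕ) : Kq := -(ε * qsum (m + 1) / qsum m)

theorem qsum_ne_zero (m : ℕ) : qsum m ≠ 0 := by
  intro h0
  have h : algebraMap (Polynomial ℂ) Kq (Polynomial.X ^ (2 * m) + 1) = qq ^ m * qsum m := by
    rw [qsum, mul_add, ← pow_add, ← two_mul, ← mul_pow, mul_inv_cancel₀ RatFunc.X_ne_zero,
      one_pow]
    simp [qq, RatFunc.algebraMap_X]
  rw [h0, mul_zero, map_eq_zero_iff _ (RatFunc.algebraMap_injective ℂ)] at h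
  simpa using congrArg (Polynomial.eval 1) h

theorem qsum_zero : qsum 0 = 2 := by norm_num [qsum]

theorem qsum_one : qsum 1 = qq + qq⁻¹ := by simp [qsum]

theorem qsum_one_mul_qsum (m : ℕ) : qsum 1 * qsum (m + 1) = qsum (m + 2) + qsum m := by
  have hq : qq * qq⁻¹ = 1 := mul_inv_cancel₀ RatFunc.X_ne_zero
  simp only [qsum]
  linear_combination (qq ^ m + qq⁻¹ ^ m) * hq

theorem neg_add_jwCoeff (ε : Kq) (m : ℕ) :
    -(ε * (qq + qq⁻¹)) + jwCoeff ε m = traceCoeff ε (m + 1) := by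
  have := qsum_ne_zero (m + 1)
  rw [jwCoeff, traceCoeff, ← qsum_one]
  field_simp
  linear_combination (-ε) * qsum_one_mul_qsum m

theorem one_add_jwCoeff_mul_traceCoeff {ε : Kq} (hε : ε * ε = 1) (m : ℕ) :
    1 + jwCoeff ε m * traceCoeff ε m = 0 := by
  have := qsum_ne_zero m
  have := qsum_ne_zero (m + 1)
  rw [jwCoeff, traceCoeff]
  field_simp
  linear_combination -hε

section JonesWenzlStep

variable {K A : Type*} [CommRing K] [Ring A] [Algebra K A] {B W X b y : A} {c γ δ : K}

def jwStep (B W : A) (c : K) : A := B + c • (B * W * B)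

theorem jwStep_mul_of_isIdempotentElem (hB : IsIdempotentElem B) :
    jwStep B W c * B = jwStep B W c := by
  rw [jwStep, add_mul, smul_mul_assoc, mul_assoc _ B, hB.eq]

theorem mul_jwStep_of_isIdempotentElem (hB : IsIdempotentElem B) :
    B * jwStep B W c = jwStep B W c := by
  rw [jwStep, mul_add, mul_smul_comm, ← mul_assoc, ← mul_assoc, hB.eq]

theorem mul_jwStep_eq_zero_of_mul_eq_zero (h : y * B = 0) : y * jwStep B W c = 0 := by
  rw [jwStep, mul_add, mul_smul_comm, ← mul_assoc, ← mul_assoc, h, zero_mul, zero_mul, smul_zero,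
    add_zero]

theorem mul_jwStep_mul (hB : IsIdempotentElem B) (hXB : Commute X B) (hX : X * X = δ • X)
    (hXWX : X * W * X = X) : X * jwStep B W c * X = (δ + c) • (B * X) := by
  have hBXB : X * B * X = δ • (B * X) := by rw [hXB.eq, mul_assoc, hX, mul_smul_comm]
  have hBWB : X * (B * W * B) * X = B * X := by
    calc X * (B * W * B) * X = B * (X * W * X) * B := by
          simp only [← mul_assoc, hXB.eq]; simp only [mul_assoc, hXB.eq]
      _ = B * X := by rw [hXWX, mul_assoc, hXB.eq, ← mul_assoc, hB.eq]
  rw [jwStep, mul_add, add_mul, mul_smul_comm, smul_mul_assoc, hBXB, hBWB, add_smul]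

theorem mul_jwStep_eq_zero (hT : W * B * W = γ • (b * W)) (hWb : Commute W b) (hbB : b * B = B)
    (hs : 1 + c * γ = 0) : W * jwStep B W c = 0 := by
  have h : W * (B * W * B) = γ • (W * B) := by
    rw [← mul_assoc, ← mul_assoc, hT, smul_mul_assoc, ← hWb.eq, mul_assoc, hbB]
  rw [jwStep, mul_add, mul_smul_comm, h, smul_smul]
  nth_rw 1 [← one_smul K (W * B)]
  rw [← add_smul, hs, zero_smul]

theorem isIdempotentElem_jwStep (hB : IsIdempotentElem B) (hT : W * B * W = γ • (b * W))
    (hBb : B * b = B) (hs : 1 + c * γ = 0) : IsIdempotentElem (jwStep B W c) := by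
  have hBWB : B * W * B * W * B = γ • (B * W * B) := by
    rw [show B * W * B * W * B = B * (W * B * W) * B by simp only [mul_assoc], hT,
      mul_smul_comm, smul_mul_assoc, ← mul_assoc, hBb]
  have hJWB : jwStep B W c * W * B = 0 := by
    rw [jwStep, add_mul, add_mul, smul_mul_assoc, smul_mul_assoc, hBWB, smul_smul]
    nth_rw 1 [← one_smul K (B * W * B)]
    rw [← add_smul, hs, zero_smul]
  have h : jwStep B W c * jwStep B W c = jwStep B W c * B + c • (jwStep B W c * B * W * B) := by
    nth_rw 2 [jwStep]
    rw [mul_add, mul_smul_comm]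
    simp only [mul_assoc]
  rw [IsIdempotentElem, h, jwStep_mul_of_isIdempotentElem hB, hJWB, smul_zero, add_zero]

theorem jwStep_add_jwStep {p q : A} (hpq : p * W * q = 0) (hqp : q * W * p = 0) :
    jwStep p W c + jwStep q W c = jwStep (p + q) W c := by
  simp only [jwStep, add_mul, mul_add, hpq, hqp, add_zero, zero_add, smul_add]
  abel

end JonesWenzlStep

section TemperleyLieb

variable (ε : Kq)

theorem UU_mul_self (i : ℕ) : UU ε i * UU ε i = -(ε * (qq + qq⁻¹)) • UU ε i := by
  simp only [UU, ← map_mul, ← map_smul]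
  exact RingQuot.mkAlgHom_rel Kq (TLBRel.Usq _)

theorem commute_UU_succ_UU {i j : ℕ} (h : i + 3 ≤ j) : Commute (UU ε (i + 1)) (UU ε j) := by
  simp only [Commute, SemiconjBy, UU, ← map_mul]
  exact RingQuot.mkAlgHom_rel Kq (TLBRel.Ucomm _ _ (by omega))

theorem UU_mul_UU_mul_UU (i : ℕ) :
    UU ε (i + 2) * UU ε (i + 1) * UU ε (i + 2) = UU ε (i + 2) := by
  simp only [UU, ← map_mul]
  exact RingQuot.mkAlgHom_rel Kq (TLBRel.Ubraid2 i)

theorem s0_mul_self : s0 ε * s0 ε = 1 := by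
  rw [s0, ← map_mul, RingQuot.mkAlgHom_rel Kq TLBRel.s0sq, map_one]

theorem UU_one_mul_s0_mul_UU_one : UU ε 1 * s0 ε * UU ε 1 = 0 := by
  simp only [UU, s0, ← map_mul]
  rw [RingQuot.mkAlgHom_rel Kq TLBRel.UsU, map_zero]

theorem commute_s0_UU {i : ℕ} (h : 2 ≤ i) : Commute (s0 ε) (UU ε i) := by
  simp only [Commute, SemiconjBy, UU, s0, ← map_mul]
  exact RingQuot.mkAlgHom_rel Kq (TLBRel.scomm _ (by omega))

end TemperleyLieb

section JonesWenzl

variable (ε η : Kq)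

theorem bB_add_two (m : ℕ) :
    bB ε η (m + 2) = jwStep (bB ε η (m + 1)) (UU ε (m + 1)) (jwCoeff ε m) := rfl

theorem commute_UU_bB : ∀ {m j : ℕ}, m < j → Commute (UU ε j) (bB ε η m)
  | 0, _, _ => Commute.one_right _
  | 1, _, h => ((Commute.one_right _).add_right
      (((commute_s0_UU ε h).symm).smul_right η)).smul_right _
  | m + 2, _, h =>
    have hB := commute_UU_bB (m := m + 1) (by omega)
    have hW := (commute_UU_succ_UU ε (i := m) (by omega)).symm
    hB.add_right (((hB.mul_right hW).mul_right hB).smul_right _)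

variable {η}

theorem s0_mul_bB (hη : η * η = 1) : ∀ m, s0 ε * bB ε η (m + 1) = η • bB ε η (m + 1)
  | 0 => by
    change s0 ε * ((2 : Kq)⁻¹ • (1 + η • s0 ε)) = η • ((2 : Kq)⁻¹ • (1 + η • s0 ε))
    rw [mul_smul_comm, mul_add, mul_one, mul_smul_comm, s0_mul_self, smul_comm η, smul_add η,
      smul_smul, hη, one_smul, add_comm]
  | m + 1 => by
    rw [bB_add_two, jwStep, mul_add, mul_smul_comm, ← mul_assoc, ← mul_assoc, s0_mul_bB hη m,
      smul_mul_assoc, smul_mul_assoc, smul_add, smul_comm η]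

theorem bB_mul_s0 (hη : η * η = 1) : ∀ m, bB ε η (m + 1) * s0 ε = η • bB ε η (m + 1)
  | 0 => by
    change (2 : Kq)⁻¹ • (1 + η • s0 ε) * s0 ε = η • ((2 : Kq)⁻¹ • (1 + η • s0 ε))
    rw [smul_mul_assoc, add_mul, one_mul, smul_mul_assoc, s0_mul_self, smul_comm η, smul_add η,
      smul_smul, hη, one_smul, add_comm]
  | m + 1 => by
    rw [bB_add_two, jwStep, add_mul, smul_mul_assoc, mul_assoc (_ * _) (bB ε η (m + 1)),
      bB_mul_s0 hη m, mul_smul_comm, smul_add, smul_comm η]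

theorem bB_succ_mul_bB : ∀ {m}, IsIdempotentElem (bB ε η m) →
    bB ε η (m + 1) * bB ε η m = bB ε η (m + 1)
  | 0, _ => mul_one _
  | _ + 1, hI => jwStep_mul_of_isIdempotentElem hI

theorem bB_mul_bB_succ : ∀ {m}, IsIdempotentElem (bB ε η m) →
    bB ε η m * bB ε η (m + 1) = bB ε η (m + 1)
  | 0, _ => one_mul _
  | _ + 1, hI => mul_jwStep_of_isIdempotentElem hI

theorem UU_mul_bB_mul_UU : ∀ {m}, IsIdempotentElem (bB ε η m) →
    UU ε (m + 1) * bB ε η (m + 1) * UU ε (m + 1) = traceCoeff ε m • (bB ε η m * UU ε (m + 1))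
  | 0, _ => by
    change UU ε 1 * ((2 : Kq)⁻¹ • (1 + η • s0 ε)) * UU ε 1 = _ • (1 * UU ε 1)
    rw [mul_smul_comm, smul_mul_assoc, mul_add, mul_one, mul_smul_comm, add_mul, smul_mul_assoc,
      UU_one_mul_s0_mul_UU_one, UU_mul_self, smul_zero, add_zero, one_mul, smul_smul, traceCoeff,
      qsum_zero, qsum_one]
    congr 1
    ring
  | m + 1, hI => by
    rw [bB_add_two, mul_jwStep_mul hI (commute_UU_bB ε η (by omega)) (UU_mul_self ε _)
      (UU_mul_UU_mul_UU ε m), neg_add_jwCoeff]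

variable {ε}

theorem isIdempotentElem_bB (hη : η * η = 1) (hε : ε * ε = 1) : ∀ m, IsIdempotentElem (bB ε η m)
  | 0 => IsIdempotentElem.one
  | 1 => by
    change (2 : Kq)⁻¹ • (1 + η • s0 ε) * ((2 : Kq)⁻¹ • (1 + η • s0 ε)) =
      (2 : Kq)⁻¹ • (1 + η • s0 ε)
    have h : (1 + η • s0 ε) * (1 + η • s0 ε) = (2 : Kq) • (1 + η • s0 ε) := by
      rw [add_mul, mul_add, mul_add, smul_mul_smul_comm, hη, s0_mul_self, one_smul, one_mul,
        mul_one, one_mul, two_smul]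
      abel
    rw [smul_mul_smul_comm, h, smul_smul, mul_assoc, inv_mul_cancel₀ two_ne_zero, mul_one]
  | m + 2 =>
    have hI := isIdempotentElem_bB hη hε m
    isIdempotentElem_jwStep (isIdempotentElem_bB hη hε (m + 1)) (UU_mul_bB_mul_UU ε hI)
      (bB_succ_mul_bB ε hI) (one_add_jwCoeff_mul_traceCoeff hε m)

theorem UU_succ_mul_bB_eq_zero (hη : η * η = 1) (hε : ε * ε = 1) :
    ∀ {i m}, i + 1 < m → UU ε (i + 1) * bB ε η m = 0
  | _, 0, h | _, 1, h => by omega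
  | i, m + 2, h => by
    have hI := isIdempotentElem_bB hη hε m
    rw [bB_add_two]
    by_cases him : i + 1 < m + 1
    · exact mul_jwStep_eq_zero_of_mul_eq_zero (UU_succ_mul_bB_eq_zero hη hε him)
    · obtain rfl : i = m := by omega
      exact mul_jwStep_eq_zero (UU_mul_bB_mul_UU ε hI) (commute_UU_bB ε η (by omega))
        (bB_mul_bB_succ ε hI) (one_add_jwCoeff_mul_traceCoeff hε _)

end JonesWenzl

section TypeD

variable (ε : Kq)

-- `rw [neg_one_smul]` fails on `TLB ε`: the `Module` instance it synthesizes is not reducibly the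
-- one behind the `Kq`-action of the quotient.
theorem neg_one_smul_TLB (x : TLB ε) : (-1 : Kq) • x = -x := neg_one_smul Kq x

theorem neg_one_mul_neg_one : (-1 : Kq) * -1 = 1 := by norm_num

theorem s0_mul_dD (m : ℕ) : s0 ε * dD ε (m + 1) = bB ε 1 (m + 1) - bB ε (-1) (m + 1) := by
  rw [dD, mul_add, s0_mul_bB ε (one_mul 1), s0_mul_bB ε neg_one_mul_neg_one, one_smul,
    neg_one_smul_TLB, sub_eq_add_neg]

theorem bB_eq_half_smul {η : Kq} (hη : η = 1 ∨ η = -1) (m : ℕ) :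
    bB ε η (m + 1) = (2 : Kq)⁻¹ • (dD ε (m + 1) + η • (s0 ε * dD ε (m + 1))) := by
  rw [s0_mul_dD, dD]
  rcases hη with rfl | rfl
  · rw [one_smul, add_add_sub_cancel, ← two_smul Kq, smul_smul, inv_mul_cancel₀ two_ne_zero,
      one_smul]
  · rw [neg_one_smul_TLB, neg_sub, add_comm (bB ε 1 _), add_add_sub_cancel, ← two_smul Kq,
      smul_smul, inv_mul_cancel₀ two_ne_zero, one_smul]

theorem bB_one_one : bB ε 1 1 = (2 : Kq)⁻¹ • (1 + s0 ε) := by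
  change (2 : Kq)⁻¹ • (1 + (1 : Kq) • s0 ε) = _
  rw [one_smul]

theorem bB_neg_one_one : bB ε (-1) 1 = (2 : Kq)⁻¹ • (1 - s0 ε) := by
  change (2 : Kq)⁻¹ • (1 + (-1 : Kq) • s0 ε) = _
  rw [neg_one_smul_TLB, sub_eq_add_neg]

theorem dD_one : dD ε 1 = 1 := by
  rw [dD, bB_one_one, bB_neg_one_one, ← smul_add, add_add_sub_cancel, ← two_smul Kq, smul_smul,
    inv_mul_cancel₀ two_ne_zero, one_smul]

theorem bB_one_mul_mul_bB_one_add (u : TLB ε) :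
    bB ε 1 1 * u * bB ε 1 1 + bB ε (-1) 1 * u * bB ε (-1) 1 =
      (2 : Kq)⁻¹ • (u + s0 ε * u * s0 ε) := by
  have h : (1 + s0 ε) * u * (1 + s0 ε) + (1 - s0 ε) * u * (1 - s0 ε) =
      (2 : Kq) • (u + s0 ε * u * s0 ε) := by
    simp only [add_mul, mul_add, sub_mul, mul_sub, one_mul, mul_one, two_smul]
    abel
  simp only [bB_one_one, bB_neg_one_one, smul_mul_assoc, mul_smul_comm, smul_smul, ← smul_add, h]
  rw [mul_assoc, inv_mul_cancel₀ two_ne_zero, mul_one]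

theorem dD_two_sub_one :
    dD ε 2 - 1 = (jwCoeff ε 0 * 2⁻¹) • (UU ε 1 + s0 ε * UU ε 1 * s0 ε) := by
  have h : dD ε 2 = dD ε 1 + jwCoeff ε 0 •
      (bB ε 1 1 * UU ε 1 * bB ε 1 1 + bB ε (-1) 1 * UU ε 1 * bB ε (-1) 1) := by
    rw [dD, dD, bB_add_two, bB_add_two, jwStep, jwStep, smul_add]
    abel
  rw [h, dD_one, add_sub_cancel_left, bB_one_mul_mul_bB_one_add, smul_smul]

theorem dD_add_three (m : ℕ) :
    dD ε (m + 3) = jwStep (dD ε (m + 2)) (UU ε (m + 2)) (jwCoeff ε (m + 1)) := by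
  have hs := commute_s0_UU ε (i := m + 2) (by omega)
  have hpm : bB ε 1 (m + 2) * UU ε (m + 2) * bB ε (-1) (m + 2) = 0 :=
    mul_mul_eq_zero_of_mul_eq_smul (by norm_num : (1 : Kq) ≠ -1) (bB_mul_s0 ε (one_mul 1) _)
      (s0_mul_bB ε neg_one_mul_neg_one _) hs
  have hmp : bB ε (-1) (m + 2) * UU ε (m + 2) * bB ε 1 (m + 2) = 0 :=
    mul_mul_eq_zero_of_mul_eq_smul (by norm_num : (-1 : Kq) ≠ 1) (bB_mul_s0 ε neg_one_mul_neg_one _)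
      (s0_mul_bB ε (one_mul 1) _) hs
  exact jwStep_add_jwStep hpm hmp

theorem dD_sub_one_mem (m : ℕ) :
    dD ε (m + 2) - 1 ∈ NonUnitalAlgebra.adjoin Kq {x | ∃ i ≤ m + 1, x = UD ε i} := by
  induction m with
  | zero =>
    rw [dD_two_sub_one]
    refine SMulMemClass.smul_mem _ (add_mem ?_ ?_) <;> apply NonUnitalAlgebra.subset_adjoin
    · exact ⟨1, le_rfl, rfl⟩
    · exact ⟨0, Nat.zero_le _, rfl⟩
  | succ m ih =>
    have hd : dD ε (m + 2) - 1 ∈ NonUnitalAlgebra.adjoin Kq {x | ∃ i ≤ m + 2, x = UD ε i} :=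
      NonUnitalAlgebra.adjoin_mono (by rintro _ ⟨i, hi, rfl⟩; exact ⟨i, by omega, rfl⟩) ih
    have hU : UU ε (m + 2) ∈ NonUnitalAlgebra.adjoin Kq {x | ∃ i ≤ m + 2, x = UD ε i} :=
      NonUnitalAlgebra.subset_adjoin Kq ⟨m + 2, le_rfl, rfl⟩
    rw [dD_add_three, jwStep, add_sub_right_comm]
    exact add_mem hd (SMulMemClass.smul_mem _ (mul_mul_mem_of_sub_one_mem hd hU))

variable {ε}

theorem UD_mul_dD (hε : ε * ε = 1) {m i : ℕ} (hi : i ≤ m + 1) : UD ε i * dD ε (m + 2) = 0 := by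
  have hkill {η : Kq} (hη : η * η = 1) {j : ℕ} (hj : j + 1 < m + 2) :
      UU ε (j + 1) * bB ε η (m + 2) = 0 :=
    UU_succ_mul_bB_eq_zero hη hε hj
  cases i with
  | zero =>
    change s0 ε * UU ε 1 * s0 ε * dD ε (m + 2) = 0
    rw [mul_assoc, s0_mul_dD, mul_sub, mul_assoc, mul_assoc, hkill (one_mul 1) (by omega),
      hkill neg_one_mul_neg_one (by omega), sub_self]
  | succ j =>
    change UU ε (j + 1) * dD ε (m + 2) = 0
    rw [dD, mul_add, hkill (one_mul 1) (by omega), hkill neg_one_mul_neg_one (by omega), add_zero]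

end TypeD

theorem stmt15 (ε : Kq) (hε : ε = 1 ∨ ε = -1) (n : ℕ) (hn : 2 ≤ n) :
    (∀ x ∈ TLDsub ε n, x ≠ 0 → IsIdempotentElem x → s0 ε * x * s0 ε = x →
      (∀ i : ℕ, i ≤ n - 1 → x * UD ε i = 0 ∧ UD ε i * x = 0) →
      x = dD ε n) ∧
    ∀ η : Kq, η = 1 ∨ η = -1 →
      bB ε η n = (2 : Kq)⁻¹ • (dD ε n + η • (s0 ε * dD ε n)) := by
  obtain ⟨m, rfl⟩ : ∃ m, n = m + 2 := ⟨n - 2, by omega⟩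
  have hε' : ε * ε = 1 := by rcases hε with rfl | rfl <;> norm_num
  refine ⟨fun x hx hx0 hxx _ hkill => ?_, fun η hη => bB_eq_half_smul ε hη (m + 1)⟩
  refine eq_of_isIdempotentElem_of_mul_eq_zero hx hx0 hxx ?_ (dD_sub_one_mem ε m) ?_
  · rintro _ ⟨i, hi, rfl⟩
    exact (hkill i hi).1
  · rintro _ ⟨i, hi, rfl⟩
    exact UD_mul_dD hε' hi

end
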